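/- arXiv:2102.05539 — 4 statements merged into one kernel-verified Lean document; each statement's English description precedes it below -/
import Mathlib

section
/- Let g : X^* → X^* be a finite-state endomorphism of the regular rooted tree over a finite alphabet X whose activity growth is polynomial (i.e. R_g(n) ≤ c·n^α for some c, α > 0 and all n, where R_g(n) is the number of words w of length n with nontrivial restriction g|_w). Then the set Ω_g = X^ℕ \ ⋃_{w ∈ V_max(g)} wX^ℕ and its full preimage g^{-1}(Ω_g) under the induced boundary map g : X^ℕ → X^ℕ are both at most countable. -/
open MeasureTheory Filter Topology
open scoped ENNReal

namespace AutoMarkov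

variable {X : Type*} {S : Type*}

/-- The cylinder set of sequences starting with the finite word `w`. -/
def cylinder (w : List X) : Set (ℕ → X) :=
  {ω | ∀ i : Fin w.length, ω i = w.get i}

/-- Product of transition probabilities `L x y₁ * L y₁ y₂ * ⋯` along a word. -/
noncomputable def chainWeight (L : X → X → ℝ≥0∞) : X → List X → ℝ≥0∞
  | _, [] => 1
  | x, y :: v => L x y * chainWeight L y v

/-- The Markov weight `l_{x₁} L_{x₁x₂} ⋯ L_{x_{n-1}x_n}` of a finite word. -/
noncomputable def cylWeight (l : X → ℝ≥0∞) (L : X → X → ℝ≥0∞) : List X → ℝ≥0∞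
  | [] => 1
  | x :: v => l x * chainWeight L x v

/-- The one-sided shift on sequences. -/
def shift : (ℕ → X) → ℕ → X := fun ω n => ω (n + 1)

/-- A tree endomorphism: preserves word length and the prefix relation. -/
def IsTreeEndo (g : List X → List X) : Prop :=
  (∀ w, (g w).length = w.length) ∧ ∀ u w : List X, u <+: w → g u <+: g w

/-- Restriction (section) of `g` by the word `u`: the unique map with
`g (u ++ w) = g u ++ restrict g u w`. -/
def restrict (g : List X → List X) (u : List X) : List X → List X :=
  fun w => (g (u ++ w)).drop u.length

/-- `activity g n` is the number of words of length `n` with nontrivial restriction. -/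
noncomputable def activity (g : List X → List X) (n : ℕ) : ℕ :=
  Set.ncard {w : List X | w.length = n ∧ restrict g w ≠ id}

/-- `g` is finite-state if it has only finitely many distinct restrictions. -/
def FiniteState (g : List X → List X) : Prop :=
  (Set.range fun u => restrict g u).Finite

/-- Polynomial activity growth: `R_g(n) ≤ c n^α` for some `c, α > 0`. -/
def PolyActivity (g : List X → List X) : Prop :=
  ∃ c α : ℝ, 0 < c ∧ 0 < α ∧ ∀ n : ℕ, 1 ≤ n → (activity g n : ℝ) ≤ c * (n : ℝ) ^ α

/-- Subexponential activity growth: for every `c > 1`, `R_g(n) ≤ c^n` eventually. -/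
def SubexpActivity (g : List X → List X) : Prop :=
  ∀ c : ℝ, 1 < c → ∀ᶠ n : ℕ in atTop, (activity g n : ℝ) ≤ c ^ n

/-- The boundary map on infinite sequences induced by a tree endomorphism. -/
def treeBoundary (g : List X → List X) : (ℕ → X) → ℕ → X :=
  fun ω n => (g (List.ofFn fun i : Fin (n + 1) => ω i)).getD n (ω n)

/-- `V(g)`: words `w` such that `g|_u` is trivial for every `u` with `g u = w`. -/
def Vset (g : List X → List X) : Set (List X) :=
  {w | ∀ u, g u = w → restrict g u = id}

/-- `V_max(g)`: elements of `V(g)` having no proper prefix in `V(g)`. -/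
def Vmax (g : List X → List X) : Set (List X) :=
  {w ∈ Vset g | ∀ v ∈ Vset g, v <+: w → v = w}

/-- `Ω_g = X^ℕ \ ⋃_{w ∈ V_max(g)} w X^ℕ`. -/
def OmegaSet (g : List X → List X) : Set (ℕ → X) :=
  (⋃ w ∈ Vmax g, cylinder w)ᶜ

/-- prefix of a sequence -/
def seqTake (n : ℕ) (ω : ℕ → X) : List X := List.ofFn fun i : Fin n => ω i

@[simp] lemma seqTake_length (n : ℕ) (ω : ℕ → X) : (seqTake n ω).length = n := by
  simp [seqTake]

@[simp] lemma seqTake_getElem (n : ℕ) (ω : ℕ → X) (i : ℕ) (h : i < (seqTake n ω).length) :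
    (seqTake n ω)[i] = ω i := by
  simp [seqTake]

lemma seqTake_eq_take {m n : ℕ} (h : m ≤ n) (ω : ℕ → X) :
    seqTake m ω = (seqTake n ω).take m := by
  apply List.ext_getElem (by simp [h])
  intro i h1 h2
  rw [List.getElem_take, seqTake_getElem, seqTake_getElem]

lemma seqTake_prefix {m n : ℕ} (h : m ≤ n) (ω : ℕ → X) : seqTake m ω <+: seqTake n ω := by
  rw [seqTake_eq_take h ω]; exact List.take_prefix _ _

lemma seqTake_succ (n : ℕ) (ω : ℕ → X) : seqTake (n+1) ω = seqTake n ω ++ [ω n] := by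
  apply List.ext_getElem (by simp)
  intro i h1 h2
  rcases Nat.lt_or_ge i n with h | h
  · rw [seqTake_getElem]
    rw [List.getElem_append_left (by simpa using h)]
    simp
  · have hi : i = n := by simp at h1; omega
    subst hi
    rw [seqTake_getElem]
    rw [List.getElem_append_right (by simp)]
    simp

lemma eq_seqTake_of_prefix {w : List X} {n : ℕ} {ω : ℕ → X}
    (h : w <+: seqTake n ω) : w = seqTake w.length ω := by
  apply List.ext_getElem (by simp)
  intro i h1 h2
  rw [h.getElem h1, seqTake_getElem, seqTake_getElem]

lemma seqTake_append (n : ℕ) {v : List X} {ω : ℕ → X} (hv : v = seqTake v.length ω) :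
    seqTake (v.length + n) ω = v ++ seqTake n (fun j => ω (v.length + j)) := by
  apply List.ext_getElem (by simp)
  intro i h1 h2
  rw [seqTake_getElem]
  rcases Nat.lt_or_ge i v.length with h | h
  · rw [List.getElem_append_left h]
    have h3 : i < (seqTake v.length ω).length := by simpa using h
    calc ω i = (seqTake v.length ω)[i] := (seqTake_getElem _ _ _ h3).symm
      _ = v[i]'h := by simp [← hv]
  · rw [List.getElem_append_right h, seqTake_getElem]
    congr 1; omega

lemma mem_cylinder_iff {w : List X} {ω : ℕ → X} :
    ω ∈ cylinder w ↔ seqTake w.length ω = w := by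
  constructor
  · intro h
    apply List.ext_getElem (by simp)
    intro i h1 h2
    rw [seqTake_getElem]
    exact h ⟨i, h2⟩
  · intro h i
    have h2 : (i : ℕ) < (seqTake w.length ω).length := by simp
    calc ω i = (seqTake w.length ω)[(i:ℕ)] := (seqTake_getElem _ _ _ h2).symm
      _ = w.get i := by simp [h]


section Endo
variable {g : List X → List X} (hg : IsTreeEndo g)
include hg

lemma endo_length (w : List X) : (g w).length = w.length := hg.1 w

lemma endo_append (u v : List X) : g (u ++ v) = g u ++ restrict g u v := by
  have hp : g u <+: g (u ++ v) := hg.2 u (u ++ v) ⟨v, rfl⟩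
  have := List.prefix_iff_eq_take.mp hp
  rw [restrict]
  conv_lhs => rw [← List.take_append_drop u.length (g (u ++ v))]
  congr 1
  rw [hg.1 u] at this
  exact this.symm

lemma restrict_length (u v : List X) : (restrict g u v).length = v.length := by
  have := congrArg List.length (endo_append hg u v)
  simp [hg.1, hg.1 u] at this
  omega

lemma restrict_isTreeEndo (u : List X) : IsTreeEndo (restrict g u) := by
  refine ⟨restrict_length hg u, fun a b hab => ?_⟩
  have h1 := endo_append hg u a
  have h2 := endo_append hg u b
  have hp : g (u ++ a) <+: g (u ++ b) :=
    hg.2 _ _ (by exact (List.prefix_append_right_inj u).mpr hab)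
  rw [h1, h2] at hp
  exact (List.prefix_append_right_inj (g u)).mp hp

lemma restrict_restrict (u v : List X) :
    restrict g (u ++ v) = restrict (restrict g u) v := by
  funext w
  have h1 : g (u ++ v ++ w) = g u ++ (restrict g u v ++ restrict (restrict g u) v w) := by
    rw [List.append_assoc, endo_append hg, endo_append (restrict_isTreeEndo hg u)]
  rw [restrict, h1]
  simp [List.drop_append, hg.1 u, restrict_length hg]

omit hg in
@[simp] lemma restrict_id (u : List X) : restrict (id : List X → List X) u = id := by
  funext w; simp [restrict]

lemma restrict_ne_id_of_append {u v : List X} (h : restrict g (u ++ v) ≠ id) :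
    restrict g u ≠ id := by
  intro hu
  rw [restrict_restrict hg, hu, restrict_id] at h
  exact h rfl

lemma seqTake_treeBoundary (n : ℕ) (ω : ℕ → X) :
    seqTake n (treeBoundary g ω) = g (seqTake n ω) := by
  apply List.ext_getElem (by simp [hg.1])
  intro i h1 h2
  rw [seqTake_getElem]
  show (g (seqTake (i+1) ω)).getD i (ω i) = _
  have hl : i < (g (seqTake (i+1) ω)).length := by simp [hg.1]
  rw [List.getD_eq_getElem _ _ hl]
  exact (hg.2 _ _ (seqTake_prefix (by simpa [hg.1] using h2) ω)).getElem hl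

end Endo

lemma mem_omega_iff {g : List X → List X} {ω : ℕ → X} :
    ω ∈ OmegaSet g ↔ ∀ n, seqTake n ω ∉ Vset g := by
  classical
  have key : ω ∈ (⋃ w ∈ Vmax g, cylinder w) ↔ ∃ n, seqTake n ω ∈ Vset g := by
    simp only [Set.mem_iUnion, exists_prop]
    constructor
    · rintro ⟨w, hw, hc⟩
      exact ⟨w.length, by rw [mem_cylinder_iff.mp hc]; exact hw.1⟩
    · intro hex
      set m := Nat.find hex with hm
      have hmem : seqTake m ω ∈ Vset g := Nat.find_spec hex
      refine ⟨seqTake m ω, ⟨hmem, ?_⟩, ?_⟩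
      · intro v hv hpre
        have hveq := eq_seqTake_of_prefix hpre
        have hvle : v.length ≤ m := by simpa using hpre.length_le
        have hge : m ≤ v.length := Nat.find_min' hex (by rw [← hveq]; exact hv)
        rw [hveq]
        congr 1
        omega
      · rw [mem_cylinder_iff, seqTake_length]
  rw [OmegaSet, Set.mem_compl_iff, key]
  push_neg
  rfl


def Dset (g : List X → List X) : Set (ℕ → X) := {ζ | ∀ n, restrict g (seqTake n ζ) ≠ id}

lemma seq_eq_of_seqTake {α β : ℕ → X} (h : ∀ n, seqTake n α = seqTake n β) : α = β := by
  funext n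
  have := h (n+1)
  have h1 : n < (seqTake (n+1) α).length := by simp
  have h2 : n < (seqTake (n+1) β).length := by simp
  calc α n = (seqTake (n+1) α)[n] := (seqTake_getElem _ _ _ h1).symm
    _ = (seqTake (n+1) β)[n] := List.getElem_of_eq this h1
    _ = β n := seqTake_getElem _ _ _ h2

lemma exists_lift [Fintype X] [Nonempty X] {g : List X → List X} (hg : IsTreeEndo g)
    {ω : ℕ → X} (hω : ω ∈ OmegaSet g) :
    ∃ ζ ∈ Dset g, treeBoundary g ζ = ω := by
  classical
  letI : Inhabited X := Classical.inhabited_of_nonempty ‹_›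
  set InT : List X → Prop := fun u => g u = seqTake u.length ω ∧ restrict g u ≠ id with hInT
  have hpc : ∀ a b : List X, a <+: b → InT b → InT a := by
    rintro a b ⟨t, rfl⟩ ⟨h1, h2⟩
    constructor
    · have hp : g a <+: seqTake (a ++ t).length ω := by
        rw [← h1]; exact hg.2 _ _ ⟨t, rfl⟩
      have := eq_seqTake_of_prefix hp
      rwa [hg.1] at this
    · exact restrict_ne_id_of_append hg h2
  set Ext : List X → Prop := fun u => ∀ m, ∃ v : List X, v.length = m ∧ InT (u ++ v) with hExt
  have hnil : Ext [] := by
    intro m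
    have := mem_omega_iff.mp hω m
    simp only [Vset, Set.mem_setOf_eq] at this
    push_neg at this
    obtain ⟨u, hu1, hu2⟩ := this
    have hlen : u.length = m := by
      have := hg.1 u; rw [hu1] at this; simpa using this.symm
    exact ⟨u, hlen, by rw [List.nil_append]; exact ⟨by rw [hu1, hlen], hu2⟩⟩
  have hstep : ∀ u : List X, Ext u → ∃ c : X, Ext (u ++ [c]) := by
    intro u hu
    by_contra hno
    push_neg at hno
    have hbad : ∀ c : X, ∃ m, ∀ v : List X, v.length = m → ¬ InT (u ++ [c] ++ v) := by
      intro c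
      have h0 := hno c
      simp only [hExt, not_forall] at h0
      obtain ⟨m, hm⟩ := h0
      refine ⟨m, fun v hv hin => ?_⟩
      exact hm ⟨v, hv, hin⟩
    choose mc hmc using hbad
    set M := Finset.univ.sup mc with hM
    obtain ⟨v, hvlen, hvInT⟩ := hu (M + 1)
    match v, hvlen with
    | c :: v', hvlen =>
      have hlen' : v'.length = M := by simpa using hvlen
      have hmcle : mc c ≤ M := by rw [hM]; exact Finset.le_sup (Finset.mem_univ c)
      refine hmc c (v'.take (mc c)) (by rw [List.length_take]; omega) (hpc _ _ ?_ hvInT)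
      rw [List.append_assoc]
      refine (List.prefix_append_right_inj u).mpr ?_
      show [c] ++ v'.take (mc c) <+: c :: v'
      exact (List.prefix_append_right_inj [c]).mpr (List.take_prefix _ _) 
  choose step hstepspec using hstep
  let f : ℕ → {u : List X // Ext u} := fun n =>
    Nat.rec ⟨[], hnil⟩ (fun _ p => ⟨p.1 ++ [step p.1 p.2], hstepspec p.1 p.2⟩) n
  have flen : ∀ n, (f n).1.length = n := by
    intro n
    induction n with
    | zero => rfl
    | succ k ih => show ((f k).1 ++ _).length = k + 1; simp [ih]
  set ζ : ℕ → X := fun n => (f (n+1)).1.getD n default with hζ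
  have hfseq : ∀ n, seqTake n ζ = (f n).1 := by
    intro n
    induction n with
    | zero => simp [seqTake]; rfl
    | succ k ih =>
      rw [seqTake_succ, ih]
      show _ = (f k).1 ++ [step (f k).1 (f k).2]
      congr 1
      rw [hζ]
      show [((f k).1 ++ [step (f k).1 (f k).2]).getD k default] = _
      rw [List.getD_eq_getElem _ _ (by simp [flen k])]
      rw [List.getElem_append_right (by simp [flen k])]
      simp [flen k]
  have hInTall : ∀ n, InT (f n).1 := by
    intro n
    obtain ⟨v, hv0, hv⟩ := (f n).2 0
    rw [List.length_eq_zero_iff.mp hv0, List.append_nil] at hv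
    exact hv
  refine ⟨ζ, ?_, ?_⟩
  · intro n
    rw [hfseq n]
    exact (hInTall n).2
  · apply seq_eq_of_seqTake
    intro n
    rw [seqTake_treeBoundary hg, hfseq n]
    have := (hInTall n).1
    rwa [flen n] at this


section Topo
variable [TopologicalSpace X] [DiscreteTopology X]

lemma isOpen_agree (n : ℕ) (x : ℕ → X) :
    IsOpen {ζ' : ℕ → X | ∀ i, i < n → ζ' i = x i} := by
  have heq : {ζ' : ℕ → X | ∀ i, i < n → ζ' i = x i}
      = ⋂ i ∈ Finset.range n, (fun ζ' : ℕ → X => ζ' i) ⁻¹' {x i} := by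
    ext ζ'; simp
  rw [heq]
  exact isOpen_biInter_finset fun i _ => (continuous_apply i).isOpen_preimage _ (isOpen_discrete _)

omit [TopologicalSpace X] [DiscreteTopology X] in
lemma seqTake_eq_of_agree {n : ℕ} {x y : ℕ → X} (h : ∀ i, i < n → y i = x i) :
    seqTake n y = seqTake n x := by
  apply List.ext_getElem (by simp)
  intro i h1 h2
  rw [seqTake_getElem, seqTake_getElem]
  exact h i (by simpa using h1)

lemma isOpen_seqTake_pred (n : ℕ) (P : List X → Prop) :
    IsOpen {ζ : ℕ → X | P (seqTake n ζ)} := by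
  rw [isOpen_iff_mem_nhds]
  intro ζ hζ
  refine Filter.mem_of_superset ((isOpen_agree n ζ).mem_nhds (fun i _ => rfl)) ?_
  intro ζ' hζ'
  show P (seqTake n ζ')
  rw [seqTake_eq_of_agree hζ']
  exact hζ

lemma isClosed_Dset (g : List X → List X) : IsClosed (Dset g) := by
  have : Dset g = ⋂ n, {ζ | (fun w => restrict g w ≠ id) (seqTake n ζ)} := by
    ext ζ; simp [Dset]
  rw [this]
  refine isClosed_iInter fun n => ?_
  rw [← isOpen_compl_iff]
  have : {ζ : ℕ → X | (fun w => restrict g w ≠ id) (seqTake n ζ)}ᶜ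
      = {ζ : ℕ → X | (fun w => restrict g w = id) (seqTake n ζ)} := by
    ext ζ; simp
  rw [this]
  exact isOpen_seqTake_pred n (fun w => restrict g w = id)

def treeOf (P : Set (ℕ → X)) : Set (List X) := {u | ∃ x ∈ P, seqTake u.length x = u}

lemma splitting {P : Set (ℕ → X)} (hP : Perfect P) {u : List X} (hu : u ∈ treeOf P) :
    ∃ v1 v2, v1 ∈ treeOf P ∧ v2 ∈ treeOf P ∧ u <+: v1 ∧ u <+: v2 ∧
      ¬ (v1 <+: v2) ∧ ¬ (v2 <+: v1) := by
  classical
  obtain ⟨x, hxP, hx⟩ := hu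
  have hacc := hP.acc x hxP
  rw [accPt_iff_nhds] at hacc
  obtain ⟨y, ⟨hyU, hyP⟩, hyx⟩ :=
    hacc _ ((isOpen_agree u.length x).mem_nhds (fun i _ => rfl))
  have hex : ∃ m, y m ≠ x m := by
    by_contra hc
    push_neg at hc
    exact hyx (funext hc)
  set m := Nat.find hex with hm
  have hmne : y m ≠ x m := Nat.find_spec hex
  have hagree : ∀ i, i < m → y i = x i := fun i hi => by
    by_contra hc
    exact absurd (Nat.find_min' hex hc) (by omega)
  have hyU' : ∀ i, i < u.length → y i = x i := hyU
  have hml : u.length ≤ m := by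
    by_contra hc
    exact hmne (hyU' m (by omega))
  refine ⟨seqTake (m+1) x, seqTake (m+1) y, ⟨x, hxP, by simp⟩, ⟨y, hyP, by simp⟩, ?_, ?_, ?_, ?_⟩
  · conv_lhs => rw [← hx]
    exact seqTake_prefix (by omega) x
  · have huy : seqTake u.length y = u := (seqTake_eq_of_agree hyU').trans hx
    conv_lhs => rw [← huy]
    exact seqTake_prefix (by omega) y
  · intro hpre
    have := hpre.eq_of_length (by simp)
    have h1 : m < (seqTake (m+1) x).length := by simp
    have := List.getElem_of_eq this h1
    rw [seqTake_getElem, seqTake_getElem] at this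
    exact hmne this.symm
  · intro hpre
    have := hpre.eq_of_length (by simp)
    have h1 : m < (seqTake (m+1) y).length := by simp
    have := List.getElem_of_eq this h1
    rw [seqTake_getElem, seqTake_getElem] at this
    exact hmne this

end Topo

lemma exists_pow_gt {C : ℝ} (hC : 0 < C) (m : ℕ) : ∃ k : ℕ, 1 ≤ k ∧ C * (k:ℝ)^m < 2^k := by
  have h := tendsto_pow_const_div_const_pow_of_one_lt m (by norm_num : (1:ℝ) < 2)
  have h2 : ∀ᶠ k : ℕ in atTop, (k:ℝ)^m / 2^k < 1/C :=
    h.eventually_lt_const (by positivity)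
  obtain ⟨k, hk1, hk2⟩ := ((eventually_ge_atTop 1).and h2).exists
  refine ⟨k, hk1, ?_⟩
  rw [div_lt_div_iff₀ (by positivity) hC] at hk2
  linarith [hk2]

lemma counting_contra [Fintype X] {g : List X → List X} (hg : IsTreeEndo g)
    (hpoly : PolyActivity g) (u0 w1 w2 : List X)
    (hq : restrict g u0 ≠ id)
    (h1 : restrict g (u0 ++ w1) = restrict g u0)
    (h2 : restrict g (u0 ++ w2) = restrict g u0)
    (hw1 : w1 ≠ []) (hw2 : w2 ≠ [])
    (h12 : ¬ w1 <+: w2) (h21 : ¬ w2 <+: w1) : False := by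
  classical
  obtain ⟨c, α, hc, hα, hbound⟩ := hpoly
  set L := max w1.length w2.length with hLdef
  have hL1 : 1 ≤ L := le_max_iff.mpr (Or.inl (List.length_pos_iff.mpr hw1))
  set Wb : Bool → List X := fun b => bif b then w1 else w2 with hWb
  set W : List Bool → List X := fun s => (s.map Wb).flatten with hW
  have hWnil : W [] = [] := rfl
  have hWcons : ∀ (b : Bool) (s : List Bool), W (b :: s) = Wb b ++ W s := fun b s => rfl
  have hWb_ne : ∀ b, Wb b ≠ [] := by intro b; cases b <;> simpa [hWb]
  have hWb_len : ∀ b, (Wb b).length ≤ L := by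
    intro b; cases b
    · simpa [hWb, hLdef] using le_max_right _ _
    · simpa [hWb, hLdef] using le_max_left _ _
  have hrestr : ∀ s, restrict g (u0 ++ W s) = restrict g u0 := by
    intro s
    induction s with
    | nil => rw [hWnil, List.append_nil]
    | cons b t ih =>
      rw [hWcons, ← List.append_assoc, restrict_restrict hg]
      have hb : restrict g (u0 ++ Wb b) = restrict g u0 := by
        cases b
        · simpa [hWb] using h2
        · simpa [hWb] using h1
      rw [hb, ← restrict_restrict hg, ih]
  have hWlen_le : ∀ s : List Bool, (W s).length ≤ s.length * L := by
    intro s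
    induction s with
    | nil => simp [hWnil]
    | cons b t ih =>
      rw [hWcons]
      simp only [List.length_append, List.length_cons]
      calc (Wb b).length + (W t).length ≤ L + t.length * L := by
            exact Nat.add_le_add (hWb_len b) ih
        _ = (t.length + 1) * L := by ring
  have hWlen_ge : ∀ s : List Bool, s.length ≤ (W s).length := by
    intro s
    induction s with
    | nil => simp [hWnil]
    | cons b t ih =>
      rw [hWcons]
      simp only [List.length_append, List.length_cons]
      have : 1 ≤ (Wb b).length := List.length_pos_iff.mpr (hWb_ne b)
      omega
  have hWinj : ∀ s t : List Bool, s.length = t.length → W s = W t → s = t := by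
    intro s
    induction s with
    | nil =>
      intro t h _
      exact (List.length_eq_zero_iff.mp h.symm).symm
    | cons b s ih =>
      intro t hlen hWeq
      match t with
      | [] => simp at hlen
      | c :: t =>
        by_cases hbc : b = c
        · subst hbc
          rw [hWcons, hWcons] at hWeq
          have := List.append_cancel_left hWeq
          rw [ih t (by simpa using hlen) this]
        · exfalso
          rw [hWcons, hWcons] at hWeq
          have hpre : Wb b <+: Wb c ∨ Wb c <+: Wb b :=
            List.prefix_or_prefix_of_prefix ⟨W s, rfl⟩ ⟨W t, hWeq.symm⟩
          cases b <;> cases c <;> simp [hWb] at hpre hbc ⊢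
          · exact hpre.elim h21 h12
          · exact hpre.elim h12 h21
  -- main inequality for every k ≥ 1
  have hmain : ∀ k : ℕ, 1 ≤ k →
      (2:ℝ)^k < (k * L : ℕ) * (c * ((u0.length + k*L : ℕ):ℝ)^α + 1) := by
    intro k hk
    set φ : (Fin k → Bool) → List X := fun f => u0 ++ W (List.ofFn f) with hφ
    have hφinj : Function.Injective φ := by
      intro f f' hff
      have := List.append_cancel_left hff
      exact List.ofFn_injective (hWinj _ _ (by simp) this)
    set d := k*L - k + 1 with hd
    have hkL : k ≤ k * L := Nat.le_mul_of_pos_right k (by omega)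
    set n₀ := 2^k / d with hn₀
    have hmaps : ∀ f : Fin k → Bool, (φ f).length ∈ Finset.Icc (u0.length + k) (u0.length + k*L) := by
      intro f
      rw [Finset.mem_Icc]
      constructor
      · have := hWlen_ge (List.ofFn f)
        simp only [hφ, List.length_append, List.length_ofFn] at this ⊢
        omega
      · have := hWlen_le (List.ofFn f)
        simp only [hφ, List.length_append, List.length_ofFn] at this ⊢
        omega
    have hcardt : (Finset.Icc (u0.length + k) (u0.length + k*L)).card = d := by
      rw [Nat.card_Icc]; omega
    obtain ⟨b, hbmem, hbcard⟩ :=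
      Finset.exists_le_card_fiber_of_mul_le_card_of_maps_to
        (fun f _ => hmaps f) ⟨u0.length + k, Finset.mem_Icc.mpr ⟨le_refl _, by omega⟩⟩
        (n := n₀) (by
          rw [hcardt]
          calc d * n₀ ≤ 2^k := by rw [hn₀]; exact Nat.mul_div_le _ _
          _ ≤ Finset.univ.card := by
              rw [Finset.card_univ, Fintype.card_fun]
              simp)
    rw [Finset.mem_Icc] at hbmem
    -- activity bound
    set Fb := Finset.univ.filter (fun f : Fin k → Bool => (φ f).length = b) with hFb
    have hsub : ((Fb.image φ : Finset (List X)) : Set (List X)) ⊆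
        {w : List X | w.length = b ∧ restrict g w ≠ id} := by
      intro w hw
      simp only [Finset.coe_image, Set.mem_image, Finset.mem_coe, hFb,
        Finset.mem_filter] at hw
      obtain ⟨f, ⟨_, hfl⟩, rfl⟩ := hw
      refine ⟨hfl, ?_⟩
      rw [hφ]
      show restrict g (u0 ++ W (List.ofFn f)) ≠ id
      rw [hrestr]
      exact hq
    have hfin : {w : List X | w.length = b ∧ restrict g w ≠ id}.Finite :=
      (List.finite_length_eq X b).subset (fun w hw => hw.1)
    have hact : n₀ ≤ activity g b := by
      calc n₀ ≤ Fb.card := hbcard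
        _ = (Fb.image φ).card := (Finset.card_image_of_injOn hφinj.injOn).symm
        _ = ((Fb.image φ : Finset (List X)) : Set (List X)).ncard := (Set.ncard_coe_finset _).symm
        _ ≤ activity g b := Set.ncard_le_ncard hsub hfin
    have hb1 : 1 ≤ b := by omega
    have hpb := hbound b hb1
    have hble : ((b:ℝ))^α ≤ (((u0.length + k*L : ℕ)):ℝ)^α := by
      apply Real.rpow_le_rpow (by positivity) _ (le_of_lt hα)
      exact_mod_cast hbmem.2
    have hact' : (n₀:ℝ) ≤ c * (((u0.length + k*L : ℕ)):ℝ)^α := by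
      calc (n₀:ℝ) ≤ (activity g b : ℝ) := by exact_mod_cast hact
        _ ≤ c * (b:ℝ)^α := hpb
        _ ≤ c * (((u0.length + k*L : ℕ)):ℝ)^α := by
            exact mul_le_mul_of_nonneg_left hble (le_of_lt hc)
    -- 2^k < d * (n₀ + 1)
    have hdpos : 0 < d := by omega
    have hnat : 2^k < d * (n₀ + 1) := by
      have hmod := Nat.mod_lt (2^k) hdpos
      have hdm := Nat.div_add_mod (2^k) d
      calc 2^k = d * n₀ + 2^k % d := by rw [hn₀]; omega
        _ < d * n₀ + d := by omega
        _ = d * (n₀ + 1) := by ring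
    have hdle : (d:ℝ) ≤ (k*L : ℕ) := by
      have : d ≤ k * L := by omega
      exact_mod_cast this
    have hstep : (2:ℝ)^k < (d:ℝ) * ((n₀:ℝ) + 1) := by
      calc (2:ℝ)^k = ((2^k : ℕ):ℝ) := by push_cast; ring
        _ < ((d * (n₀+1) : ℕ):ℝ) := by exact_mod_cast hnat
        _ = (d:ℝ) * ((n₀:ℝ)+1) := by push_cast; ring
    calc (2:ℝ)^k < (d:ℝ) * ((n₀:ℝ) + 1) := hstep
      _ ≤ ((k*L:ℕ):ℝ) * (c * (((u0.length + k*L : ℕ)):ℝ)^α + 1) := by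
          apply mul_le_mul hdle (by linarith) (by positivity) (by positivity)
  -- asymptotic contradiction
  set U : ℝ := (u0.length : ℝ) with hU
  set m := ⌈α⌉₊ + 1 with hm
  set C := (L:ℝ) * (c * ((U + L):ℝ)^α + 1) with hC
  have hUL : (0:ℝ) < U + L := by
    have : (0:ℝ) < (L:ℝ) := by exact_mod_cast hL1
    positivity
  have hCpos : 0 < C := by
    have h1L : (0:ℝ) < (L:ℝ) := by exact_mod_cast hL1
    have : (0:ℝ) ≤ c * ((U + L):ℝ)^α := by positivity
    rw [hC]; nlinarith
  obtain ⟨k, hk1, hk2⟩ := exists_pow_gt hCpos m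
  have hmk := hmain k hk1
  have hk1' : (1:ℝ) ≤ (k:ℝ) := by exact_mod_cast hk1
  -- bound the RHS of hmain by C * k^m
  have hb1 : ((u0.length + k*L : ℕ):ℝ) ≤ (U + L) * k := by
    push_cast
    have : (0:ℝ) ≤ (L:ℝ) := by positivity
    nlinarith
  have hb2 : ((u0.length + k*L : ℕ):ℝ)^α ≤ (U+L)^α * (k:ℝ)^(⌈α⌉₊:ℝ) := by
    calc ((u0.length + k*L : ℕ):ℝ)^α ≤ ((U + L) * k)^α :=
          Real.rpow_le_rpow (by positivity) hb1 (le_of_lt hα)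
      _ = (U+L)^α * (k:ℝ)^α := Real.mul_rpow (le_of_lt hUL) (by positivity)
      _ ≤ (U+L)^α * (k:ℝ)^(⌈α⌉₊:ℝ) := by
          apply mul_le_mul_of_nonneg_left _ (by positivity)
          exact Real.rpow_le_rpow_of_exponent_le hk1' (Nat.le_ceil α)
  have hkc : (k:ℝ)^(⌈α⌉₊:ℝ) = (k:ℝ)^(⌈α⌉₊ : ℕ) := Real.rpow_natCast _ _
  have hone_le : (1:ℝ) ≤ (k:ℝ)^(⌈α⌉₊:ℕ) := one_le_pow₀ hk1'
  have hfinal : ((k*L:ℕ):ℝ) * (c * ((u0.length + k*L : ℕ):ℝ)^α + 1) ≤ C * (k:ℝ)^m := by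
    have hLpos : (0:ℝ) < (L:ℝ) := by exact_mod_cast hL1
    have e1 : c * ((u0.length + k*L : ℕ):ℝ)^α + 1 ≤ (c * (U+L)^α + 1) * (k:ℝ)^(⌈α⌉₊:ℕ) := by
      rw [hkc] at hb2
      have h3 : c * ((u0.length + k*L : ℕ):ℝ)^α ≤ c * ((U+L)^α * (k:ℝ)^(⌈α⌉₊:ℕ)) :=
        mul_le_mul_of_nonneg_left hb2 (le_of_lt hc)
      have h4 : (0:ℝ) ≤ c * (U+L)^α := by positivity
      nlinarith
    have e2 : ((k*L:ℕ):ℝ) = (k:ℝ) * (L:ℝ) := by push_cast; ring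
    rw [e2, hC, hm]
    have h5 : (0:ℝ) ≤ (k:ℝ) * (L:ℝ) := by positivity
    calc (k:ℝ) * (L:ℝ) * (c * ((u0.length + k*L : ℕ):ℝ)^α + 1)
        ≤ (k:ℝ) * (L:ℝ) * ((c * (U+L)^α + 1) * (k:ℝ)^(⌈α⌉₊:ℕ)) :=
          mul_le_mul_of_nonneg_left e1 h5
      _ = (L:ℝ) * (c * (U + L)^α + 1) * (k:ℝ)^(⌈α⌉₊ + 1) := by ring
  linarith [hmk, hfinal, hk2]

lemma countable_Dset [Fintype X] [TopologicalSpace X] [DiscreteTopology X]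
    {g : List X → List X} (hg : IsTreeEndo g) (hfs : FiniteState g)
    (hpoly : PolyActivity g) : (Dset g).Countable := by
  classical
  by_contra hunc
  obtain ⟨V, P, hV, hP, hVP⟩ := exists_countable_union_perfect_of_isClosed (isClosed_Dset g)
  have hPD : P ⊆ Dset g := hVP ▸ Set.subset_union_right
  have hPne : P.Nonempty := by
    rcases Set.eq_empty_or_nonempty P with h | h
    · exact absurd (by rw [hVP, h, Set.union_empty]; exact hV) hunc
    · exact h
  have htne : ∀ u ∈ treeOf P, restrict g u ≠ id := by
    rintro u ⟨x, hxP, hx⟩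
    have := hPD hxP u.length
    rwa [hx] at this
  set States : List X → Set (List X → List X) :=
    fun u => {q | ∃ v, v ∈ treeOf P ∧ u <+: v ∧ restrict g v = q} with hStates
  have hfin : ∀ u, (States u).Finite := fun u =>
    hfs.subset (by rintro q ⟨v, _, _, rfl⟩; exact ⟨v, rfl⟩)
  have hmono : ∀ u u' : List X, u <+: u' → States u' ⊆ States u := by
    rintro u u' h q ⟨v, hv, hpre, rfl⟩
    exact ⟨v, hv, h.trans hpre, rfl⟩
  have hnilP : ([] : List X) ∈ treeOf P := by
    obtain ⟨x, hx⟩ := hPne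
    exact ⟨x, hx, by simp [seqTake]⟩
  set NS : Set ℕ := {n | ∃ u, u ∈ treeOf P ∧ (States u).ncard = n} with hNS
  have hNSne : NS.Nonempty := ⟨_, [], hnilP, rfl⟩
  obtain ⟨u0, hu0P, hu0card⟩ := Nat.sInf_mem hNSne
  have hkey : ∀ v, v ∈ treeOf P → u0 <+: v → States v = States u0 := by
    intro v hv hpre
    apply Set.eq_of_subset_of_ncard_le (hmono _ _ hpre) _ (hfin _)
    rw [hu0card]
    exact Nat.sInf_le ⟨v, hv, rfl⟩
  obtain ⟨a1, a2, ha1P, ha2P, hpre1, hpre2, hinc12, hinc21⟩ := splitting hP hu0P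
  have hq1 : restrict g u0 ∈ States a1 := by
    rw [hkey a1 ha1P hpre1]
    exact ⟨u0, hu0P, List.prefix_refl _, rfl⟩
  have hq2 : restrict g u0 ∈ States a2 := by
    rw [hkey a2 ha2P hpre2]
    exact ⟨u0, hu0P, List.prefix_refl _, rfl⟩
  obtain ⟨v1, hv1P, hav1, hr1⟩ := hq1
  obtain ⟨v2, hv2P, hav2, hr2⟩ := hq2
  have hvinc12 : ¬ v1 <+: v2 := by
    intro h
    rcases List.prefix_or_prefix_of_prefix (hav1.trans h) hav2 with h' | h'
    · exact hinc12 h'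
    · exact hinc21 h'
  have hvinc21 : ¬ v2 <+: v1 := by
    intro h
    rcases List.prefix_or_prefix_of_prefix hav1 (hav2.trans h) with h' | h'
    · exact hinc12 h'
    · exact hinc21 h'
  have hu0v1 : u0 <+: v1 := hpre1.trans hav1
  have hu0v2 : u0 <+: v2 := hpre2.trans hav2
  obtain ⟨w1, rfl⟩ := hu0v1
  obtain ⟨w2, rfl⟩ := hu0v2
  have hw1ne : w1 ≠ [] := by
    rintro rfl
    rw [List.append_nil] at hav1
    exact hinc12 (hav1.trans hpre2)
  have hw2ne : w2 ≠ [] := by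
    rintro rfl
    rw [List.append_nil] at hav2
    exact hinc21 (hav2.trans hpre1)
  exact counting_contra hg hpoly u0 w1 w2 (htne u0 hu0P) hr1 hr2 hw1ne hw2ne
    (fun h => hvinc12 ((List.prefix_append_right_inj u0).mpr h))
    (fun h => hvinc21 ((List.prefix_append_right_inj u0).mpr h))

def prepend (v : List X) (η : ℕ → X) : ℕ → X :=
  fun n => if h : n < v.length then v[n] else η (n - v.length)

lemma prepend_add (v : List X) (η : ℕ → X) (j : ℕ) : prepend v η (v.length + j) = η j := by
  rw [prepend]
  rw [dif_neg (by omega)]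
  congr 1
  omega

lemma prepend_injective (v : List X) : Function.Injective (prepend v : (ℕ → X) → ℕ → X) := by
  intro η η' h
  funext j
  have := congrFun h (v.length + j)
  rwa [prepend_add, prepend_add] at this

lemma seqTake_prepend_le {v : List X} {n : ℕ} (h : n ≤ v.length) (η : ℕ → X) :
    seqTake n (prepend v η) = v.take n := by
  apply List.ext_getElem (by simp; omega)
  intro i h1 h2
  rw [seqTake_getElem, List.getElem_take, prepend, dif_pos (by simp at h1; omega)]

lemma seqTake_prepend_add (v : List X) (η : ℕ → X) (n : ℕ) :
    seqTake (v.length + n) (prepend v η) = v ++ seqTake n η := by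
  have hv : v = seqTake v.length (prepend v η) := by
    rw [seqTake_prepend_le (le_refl _), List.take_length]
  have h2 : (seqTake n fun j => prepend v η (v.length + j)) = seqTake n η := by
    apply List.ext_getElem (by simp)
    intro i h1 h2
    rw [seqTake_getElem, seqTake_getElem, prepend_add]
  rw [seqTake_append n hv, h2]

lemma treeBoundary_prepend {g : List X → List X} (hg : IsTreeEndo g) {v : List X}
    (hv : restrict g v = id) (η : ℕ → X) :
    treeBoundary g (prepend v η) = prepend (g v) η := by
  apply seq_eq_of_seqTake
  intro n
  rw [seqTake_treeBoundary hg]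
  rcases le_or_gt n v.length with h | h
  · rw [seqTake_prepend_le h, seqTake_prepend_le (by rw [hg.1]; exact h)]
    have hp : g (v.take n) <+: g v := hg.2 _ _ (List.take_prefix _ _)
    have := List.prefix_iff_eq_take.mp hp
    rw [this, hg.1]
    simp [List.take_take, min_def, h]
  · have hn : n = v.length + (n - v.length) := by omega
    rw [hn, seqTake_prepend_add, endo_append hg, hv]
    have hgl : (g v).length = v.length := hg.1 v
    rw [← hgl, seqTake_prepend_add]
    rfl

lemma prepend_reconstruct {ζ : ℕ → X} (n : ℕ) :
    ζ = prepend (seqTake n ζ) (fun j => ζ (n + j)) := by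
  funext i
  rw [prepend]
  split
  · rename_i h
    rw [seqTake_getElem]
  · rename_i h
    simp only [seqTake_length] at h ⊢
    congr 1
    omega


theorem stmt0 [Fintype X] [Nontrivial X] (g : List X → List X)
    (hg : IsTreeEndo g) (hfs : FiniteState g) (hpoly : PolyActivity g) :
    (OmegaSet g).Countable ∧ (treeBoundary g ⁻¹' OmegaSet g).Countable := by
  classical
  letI : TopologicalSpace X := ⊥
  haveI : DiscreteTopology X := ⟨rfl⟩
  have hD := countable_Dset hg hfs hpoly
  have hΩ : (OmegaSet g).Countable := by
    refine (hD.image (treeBoundary g)).mono ?_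
    intro ω hω
    obtain ⟨ζ, hζ, he⟩ := exists_lift hg hω
    exact ⟨ζ, hζ, he⟩
  refine ⟨hΩ, ?_⟩
  have hsub2 : treeBoundary g ⁻¹' OmegaSet g ⊆
      Dset g ∪ ⋃ v : List X, prepend v '' (prepend (g v) ⁻¹' OmegaSet g) := by
    intro ζ hζ
    by_cases hζD : ζ ∈ Dset g
    · exact Or.inl hζD
    · refine Or.inr ?_
      simp only [Dset, Set.mem_setOf_eq, not_forall, not_not] at hζD
      obtain ⟨n, hn⟩ := hζD
      refine Set.mem_iUnion.mpr ⟨seqTake n ζ, (fun j => ζ (n + j)), ?_, ?_⟩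
      · show prepend (g (seqTake n ζ)) (fun j => ζ (n + j)) ∈ OmegaSet g
        have he : treeBoundary g ζ = prepend (g (seqTake n ζ)) (fun j => ζ (n + j)) := by
          conv_lhs => rw [prepend_reconstruct (ζ := ζ) n]
          rw [treeBoundary_prepend hg hn]
        rw [← he]
        exact hζ
      · exact (prepend_reconstruct n).symm
  exact ((hD.union (Set.countable_iUnion fun v =>
    (hΩ.preimage (prepend_injective (g v))).image _)).mono hsub2)


end AutoMarkov
end

section
/- Let μ be the shift-invariant Markov measure on X^ℕ defined by a stochastic matrix L with positive stationary probability vector l, let A = (X, S, π, λ) be a Mealy automaton with initial state g ∈ S, and let t be a stationary probability vector of the stochastic matrix T = T_{L,A} on S × X. If t(g,x) > 0 for all x ∈ X, then the pushforward measure π̃_{g*}μ on (S×X)^ℕ is absolutely continuous with respect to the Markov measure P on (S×X)^ℕ defined by T and t. -/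
open MeasureTheory Filter Topology
open Set
open scoped ENNReal

namespace AutoMarkov

variable {X : Type*} {S : Type*}

/-- Extension of the transition function of a Mealy automaton to finite words. -/
def piExt (πf : S → X → S) : S → List X → S
  | s, [] => s
  | s, x :: w => piExt πf (πf s x) w

/-- Extension of the output function of a Mealy automaton to finite words. -/
def lamExt (πf : S → X → S) (lam : S → X → X) : S → List X → List X
  | _, [] => []
  | s, x :: w => lam s x :: lamExt πf lam (πf s x) w

/-- The action of the state `g` of a Mealy automaton on infinite sequences. -/
def autAct (πf : S → X → S) (lam : S → X → X) (g : S) : (ℕ → X) → ℕ → X :=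
  fun ω n => lam (piExt πf g (List.ofFn fun i : Fin n => ω i)) (ω n)

/-- The matrix `T = T_{L,A}` on `S × X`. -/
noncomputable def Tmat [DecidableEq S] (πf : S → X → S) (L : X → X → ℝ≥0∞) :
    S × X → S × X → ℝ≥0∞ :=
  fun p q => if πf p.1 p.2 = q.1 then L p.2 q.2 else 0

/-- The matrix `K = K_{l,A}` on `S`. -/
noncomputable def Kmat [Fintype X] [DecidableEq S] (πf : S → X → S) (l : X → ℝ≥0∞) :
    S → S → ℝ≥0∞ :=
  fun s₀ s₁ => ∑ x : X, if πf s₀ x = s₁ then l x else 0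

/-- The automaton is strongly connected: any state is reachable from any state. -/
def StronglyConnected (πf : S → X → S) : Prop :=
  ∀ s r : S, ∃ w : List X, piExt πf s w = r

/-- The automaton is `L`-strongly connected. -/
def LStronglyConnected (πf : S → X → S) (L : X → X → ℝ≥0∞) : Prop :=
  ∀ s r : S, ∀ x y : X, ∃ w : List X,
    piExt πf s (x :: w) = r ∧ chainWeight L x (w ++ [y]) ≠ 0

/-- Irreducibility of a stochastic matrix: positive-probability path between any
two symbols. -/
def IrreducibleMat (L : X → X → ℝ≥0∞) : Prop :=
  ∀ x y : X, ∃ v : List X, chainWeight L x (v ++ [y]) ≠ 0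

/-- The automaton is reversible: every state has a unique `x`-predecessor. -/
def Reversible (πf : S → X → S) : Prop :=
  ∀ (s : S) (x : X), ∃! s₀ : S, πf s₀ x = s

/-- The map `π̃_g : X^ℕ → (S×X)^ℕ` recording the states of the automaton along
with the input. -/
def piTilde (πf : S → X → S) (g : S) : (ℕ → X) → ℕ → S × X :=
  fun ω n => (piExt πf g (List.ofFn fun i : Fin n => ω i), ω n)

/-- The 1-block factor map `λ̃ : (S×X)^ℕ → X^ℕ`. -/
def lamTilde (lam : S → X → X) : (ℕ → S × X) → ℕ → X :=
  fun ω n => lam (ω n).1 (ω n).2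

open Classical in
/-- consistency of a word of (state, letter) pairs started at state `s`. -/
def good (πf : S → X → S) : S → List (S × X) → Prop
  | _, [] => True
  | s, p :: w => p.1 = s ∧ good πf (πf s p.2) w

lemma good_cons (πf : S → X → S) (s : S) (p : S × X) (w : List (S × X)) :
    good πf s (p :: w) ↔ p.1 = s ∧ good πf (πf s p.2) w := Iff.rfl

lemma chainWeight_cons {Y : Type*} (L : Y → Y → ℝ≥0∞) (x y : Y) (v : List Y) :
    chainWeight L x (y :: v) = L x y * chainWeight L y v := rfl

open Classical in
lemma chainWeight_Tmat [DecidableEq S] (πf : S → X → S) (L : X → X → ℝ≥0∞)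
    (p : S × X) (w : List (S × X)) :
    chainWeight (Tmat πf L) p w =
      if good πf (πf p.1 p.2) w then chainWeight L p.2 (w.map Prod.snd) else 0 := by
  classical
  induction w generalizing p with
  | nil => simp [chainWeight, good]
  | cons q w ih =>
    obtain ⟨r, y⟩ := q
    show Tmat πf L p (r, y) * chainWeight (Tmat πf L) (r, y) w = _
    rw [ih]
    simp only [Tmat, good_cons, List.map_cons, chainWeight_cons]
    by_cases h1 : πf p.1 p.2 = r
    · subst h1
      by_cases h2 : good πf (πf (πf p.1 p.2) y) w
      · simp [h2, mul_assoc]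
      · simp [h2]
    · simp [h1, Ne.symm h1]

lemma piTilde_succ (πf : S → X → S) (g : S) (ω : ℕ → X) (n : ℕ) :
    piTilde πf g ω (n + 1) = piTilde πf (πf g (ω 0)) (shift ω) n := by
  simp only [piTilde, shift, List.ofFn_succ, piExt]
  rfl

lemma mem_cylinder_cons {Y : Type*} (a : Y) (w : List Y) (ω : ℕ → Y) :
    ω ∈ cylinder (a :: w) ↔ ω 0 = a ∧ shift ω ∈ cylinder w := by
  simp only [cylinder, Set.mem_setOf_eq, List.length_cons, Fin.forall_fin_succ, shift]
  exact Iff.rfl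

lemma mem_preimage_cyl (πf : S → X → S) (w : List (S × X)) :
    ∀ (g : S) (ω : ℕ → X),
      piTilde πf g ω ∈ cylinder w ↔ good πf g w ∧ ω ∈ cylinder (w.map Prod.snd) := by
  induction w with
  | nil => intro g ω; simp [cylinder, good]; exact fun i => absurd i.2 (by simp)
  | cons p w ih =>
    intro g ω
    rw [mem_cylinder_cons]
    have h0 : piTilde πf g ω 0 = (g, ω 0) := rfl
    have hs : shift (piTilde πf g ω) = piTilde πf (πf g (ω 0)) (shift ω) :=
      funext fun n => piTilde_succ πf g ω n
    rw [h0, hs, ih]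
    show _ ↔ good πf g (p :: w) ∧ ω ∈ cylinder (p.2 :: w.map Prod.snd)
    rw [mem_cylinder_cons]
    constructor
    · rintro ⟨hp, hg, hc⟩
      obtain ⟨h1, h2⟩ := Prod.mk.injEq .. ▸ hp
      refine ⟨⟨h1.symm ▸ rfl, ?_⟩, h2, hc⟩
      · rw [← h2] at *; rw [← h1] at *; exact hg
    · rintro ⟨⟨h1, hg⟩, h2, hc⟩
      subst h1; rw [← h2] at hg
      exact ⟨Prod.ext_iff.2 ⟨rfl, h2⟩, hg, hc⟩

lemma measurableSet_cylinder {Y : Type*} [MeasurableSpace Y] [MeasurableSingletonClass Y]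
    (w : List Y) : MeasurableSet (cylinder w : Set (ℕ → Y)) := by
  have : (cylinder w : Set (ℕ → Y)) =
      ⋂ i : Fin w.length, (fun ω : ℕ → Y => ω i) ⁻¹' {w.get i} := by
    ext ω; simp [cylinder]
  rw [this]
  exact MeasurableSet.iInter fun i =>
    (measurable_pi_apply (i : ℕ)) (measurableSet_singleton _)

lemma generateFrom_cylinders {Y : Type*} [Fintype Y] [MeasurableSpace Y]
    [MeasurableSingletonClass Y] :
    MeasurableSpace.generateFrom {s : Set (ℕ → Y) | ∃ w : List Y, s = cylinder w} =
      MeasurableSpace.pi := by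
  apply le_antisymm
  · rw [MeasurableSpace.generateFrom_le_iff]
    rintro s ⟨w, rfl⟩
    exact measurableSet_cylinder w
  · refine iSup_le fun n => ?_
    rintro _ ⟨s, -, rfl⟩
    have hsing : ∀ p : Y, MeasurableSet[MeasurableSpace.generateFrom
        {s : Set (ℕ → Y) | ∃ w : List Y, s = cylinder w}]
        ((fun ω : ℕ → Y => ω n) ⁻¹' {p}) := by
      intro p
      have : (fun ω : ℕ → Y => ω n) ⁻¹' {p} =
          ⋃ (v : Fin (n + 1) → Y) (_ : v (Fin.last n) = p), cylinder (List.ofFn v) := by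
        ext ω
        simp only [Set.mem_preimage, Set.mem_singleton_iff, Set.mem_iUnion]
        constructor
        · intro h
          refine ⟨fun i => ω i, h, ?_⟩
          intro i
          rw [List.get_ofFn, Fin.coe_cast]
        · rintro ⟨v, hv, hω⟩
          have := hω (Fin.cast (List.length_ofFn : (List.ofFn v).length = _).symm (Fin.last n))
          rw [List.get_ofFn] at this
          simp only [Fin.coe_cast, Fin.val_last] at this
          exact this.trans hv
      rw [this]
      exact MeasurableSet.iUnion fun v => MeasurableSet.iUnion fun _ =>
        MeasurableSpace.measurableSet_generateFrom ⟨List.ofFn v, rfl⟩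
    have : (fun ω : ℕ → Y => ω n) ⁻¹' s = ⋃ p ∈ s, (fun ω : ℕ → Y => ω n) ⁻¹' {p} := by
      ext ω; simp
    rw [this]
    exact MeasurableSet.biUnion s.to_countable fun p _ => hsing p

lemma isPiSystem_cylinders {Y : Type*} :
    IsPiSystem {s : Set (ℕ → Y) | ∃ w : List Y, s = cylinder w} := by
  have key : ∀ (w v : List Y), w.length ≤ v.length →
      (cylinder w ∩ cylinder v : Set (ℕ → Y)).Nonempty →
      cylinder w ∩ cylinder v = cylinder v := by
    intro w v hle ⟨ω, hw, hv⟩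
    apply Set.inter_eq_self_of_subset_right
    intro ω' hω' i
    have hj : (i : ℕ) < v.length := lt_of_lt_of_le i.2 hle
    calc ω' i = v.get ⟨i, hj⟩ := hω' ⟨i, hj⟩
    _ = ω i := (hv ⟨i, hj⟩).symm
    _ = w.get i := hw i
  rintro _ ⟨w, rfl⟩ _ ⟨v, rfl⟩ hne
  rcases le_total w.length v.length with h | h
  · rw [key w v h hne]; exact ⟨v, rfl⟩
  · rw [Set.inter_comm] at hne ⊢
    rw [key v w h hne]; exact ⟨w, rfl⟩


lemma cylinder_nil {Y : Type*} : (cylinder ([] : List Y) : Set (ℕ → Y)) = Set.univ := by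
  ext ω; simp [cylinder]

lemma eval_zero_preimage {Y : Type*} (p : Y) :
    (fun ω : ℕ → Y => ω 0) ⁻¹' {p} = cylinder [p] := by
  ext ω
  simp [cylinder, Fin.forall_fin_one]


theorem stmt4 [Fintype X] [Fintype S] [DecidableEq S]
    [MeasurableSpace X] [MeasurableSingletonClass X]
    [MeasurableSpace S] [MeasurableSingletonClass S]
    (L : X → X → ℝ≥0∞) (l : X → ℝ≥0∞)
    (hL : ∀ x, ∑ y : X, L x y = 1) (hl1 : ∑ x : X, l x = 1)
    (hstat : ∀ y, ∑ x : X, l x * L x y = l y) (hlpos : ∀ x, 0 < l x)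
    (μ : Measure (ℕ → X)) (hμ : ∀ w : List X, μ (cylinder w) = cylWeight l L w)
    (πf : S → X → S) (lam : S → X → X) (g : S)
    (t : S × X → ℝ≥0∞) (ht1 : ∑ p : S × X, t p = 1)
    (htstat : ∀ q : S × X, ∑ p : S × X, t p * Tmat πf L p q = t q)
    (P : Measure (ℕ → S × X))
    (hP : ∀ w : List (S × X), P (cylinder w) = cylWeight t (Tmat πf L) w)
    (hmeas : Measurable (piTilde πf g))
    (hpos : ∀ x : X, 0 < t (g, x)) :
    Measure.map (piTilde πf g) μ ≪ P := by
  classical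
  -- basic facts about t
  have ht_le : ∀ p : S × X, t p ≤ 1 := fun p =>
    ht1 ▸ Finset.single_le_sum (fun i _ => zero_le) (Finset.mem_univ p)
  have ht_top : ∀ p : S × X, t p ≠ ∞ := fun p => ne_top_of_le_ne_top ENNReal.one_ne_top (ht_le p)
  set C : Set (Set (ℕ → S × X)) := {s | ∃ w : List (S × X), s = cylinder w} with hCdef
  set F : S × X → ℝ≥0∞ := fun p => if p.1 = g then l p.2 * (t p)⁻¹ else 0 with hFdef
  set f : (ℕ → S × X) → ℝ≥0∞ := fun ω => F (ω 0) with hfdef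
  have hfmeas : Measurable f :=
    (measurable_of_countable F).comp (measurable_pi_apply 0)
  -- value of the pushforward on cylinders
  have hmap : ∀ w : List (S × X), Measure.map (piTilde πf g) μ (cylinder w) =
      if good πf g w then cylWeight l L (w.map Prod.snd) else 0 := by
    intro w
    rw [Measure.map_apply hmeas (measurableSet_cylinder w)]
    by_cases hgood : good πf g w
    · have : piTilde πf g ⁻¹' cylinder w = cylinder (w.map Prod.snd) := by
        ext ω; rw [Set.mem_preimage, mem_preimage_cyl]; simp [hgood]
      rw [this, hμ, if_pos hgood]
    · have : piTilde πf g ⁻¹' cylinder w = ∅ := by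
        ext ω; rw [Set.mem_preimage, mem_preimage_cyl]; simp [hgood]
      rw [this, if_neg hgood]; simp
  -- value of withDensity on cylinders
  have hwd : ∀ w : List (S × X), P.withDensity f (cylinder w) =
      if good πf g w then cylWeight l L (w.map Prod.snd) else 0 := by
    intro w
    have hgoodnil : good πf g ([] : List (S × X)) := trivial
    rw [withDensity_apply f (measurableSet_cylinder w)]
    match w with
    | [] =>
      rw [cylinder_nil, Measure.restrict_univ, if_pos hgoodnil]
      show ∫⁻ ω, F (ω 0) ∂P = cylWeight l L []
      rw [← lintegral_map (measurable_of_countable F) (measurable_pi_apply 0),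
        lintegral_fintype]
      have hval : ∀ p : S × X, Measure.map (fun ω : ℕ → S × X => ω 0) P {p} = t p := by
        intro p
        rw [Measure.map_apply (measurable_pi_apply 0) (measurableSet_singleton p),
          eval_zero_preimage, hP]
        show t p * chainWeight (Tmat πf L) p [] = t p
        show t p * 1 = t p
        rw [mul_one]
      simp only [hval]
      have : ∀ p : S × X, F p * t p = if p.1 = g then l p.2 else 0 := by
        intro p
        show (if p.1 = g then l p.2 * (t p)⁻¹ else 0) * t p = if p.1 = g then l p.2 else 0
        by_cases hp : p.1 = g
        · have h0 : t p ≠ 0 := by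
            have := hpos p.2
            rw [← hp, Prod.mk.eta] at this
            exact this.ne'
          rw [if_pos hp, if_pos hp, mul_assoc, ENNReal.inv_mul_cancel h0 (ht_top p), mul_one]
        · rw [if_neg hp, if_neg hp, zero_mul]
      rw [Finset.sum_congr rfl fun p _ => this p]
      show _ = (1 : ℝ≥0∞)
      calc ∑ p : S × X, (if p.1 = g then l p.2 else 0)
          = ∑ s : S, ∑ x : X, (if s = g then l x else 0) := Fintype.sum_prod_type _
        _ = ∑ s : S, (if s = g then ∑ x : X, l x else 0) := by
            refine Finset.sum_congr rfl fun s _ => ?_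
            split <;> simp
        _ = ∑ x : X, l x := by simp
        _ = 1 := hl1
    | p :: rest =>
      have hsub : ∀ ω ∈ cylinder (p :: rest), f ω = F p := by
        intro ω hω
        rw [hfdef]
        simp only []
        rw [((mem_cylinder_cons p rest ω).1 hω).1]
      rw [setLIntegral_congr_fun (measurableSet_cylinder _) (show EqOn f (fun _ => F p) (cylinder (p :: rest)) from hsub),
        setLIntegral_const, hP]
      show F p * (t p * chainWeight (Tmat πf L) p rest) = _
      rw [chainWeight_Tmat]
      by_cases h1 : p.1 = g
      · have h0 : t p ≠ 0 := by
          have := hpos p.2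
          rw [← h1, Prod.mk.eta] at this
          exact this.ne'
        by_cases h2 : good πf (πf g p.2) rest
        · rw [if_pos (show good πf (πf p.1 p.2) rest by rw [h1]; exact h2),
            if_pos (show good πf g (p :: rest) from ⟨h1, h2⟩)]
          show (if p.1 = g then l p.2 * (t p)⁻¹ else 0) *
              (t p * chainWeight L p.2 (rest.map Prod.snd)) =
            l p.2 * chainWeight L p.2 (rest.map Prod.snd)
          rw [if_pos h1, ← mul_assoc, mul_assoc (l p.2),
            ENNReal.inv_mul_cancel h0 (ht_top p), mul_one]
        · rw [if_neg (show ¬ good πf (πf p.1 p.2) rest by rw [h1]; exact h2),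
            if_neg (show ¬ good πf g (p :: rest) from fun h => h2 (h1 ▸ h.2)),
            mul_zero, mul_zero]
      · rw [if_neg (show ¬ good πf g (p :: rest) from fun h => h1 h.1)]
        show (if p.1 = g then l p.2 * (t p)⁻¹ else 0) * _ = 0
        rw [if_neg h1, zero_mul]
  -- the pushforward is a finite measure
  have huniv : Measure.map (piTilde πf g) μ Set.univ = 1 := by
    rw [← cylinder_nil, hmap, if_pos (show good πf g ([] : List (S × X)) from trivial)]; rfl
  have hfin : IsFiniteMeasure (Measure.map (piTilde πf g) μ) :=
    ⟨by rw [huniv]; exact ENNReal.one_lt_top⟩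
  have heq : Measure.map (piTilde πf g) μ = P.withDensity f := by
    refine ext_of_generate_finite C generateFrom_cylinders.symm isPiSystem_cylinders
      ?_ ?_
    · rintro _ ⟨w, rfl⟩
      rw [hmap, hwd]
    · rw [huniv, ← cylinder_nil, hwd, if_pos (show good πf g ([] : List (S × X)) from trivial)]; rfl
  rw [heq]
  exact withDensity_absolutelyContinuous P f


end AutoMarkov
end

section
/- Let l be a probability vector on X, let A = (X, S, π, λ) be a Mealy automaton, let L be the stochastic matrix all of whose rows equal l (so the Markov measure defined by L is the Bernoulli measure with distribution l), and let k be a stationary probability vector of K = K_{l,A}. Then the tensor product k ⊗ l, with coordinates (k ⊗ l)_{(s,x)} = k_s l_x, is a stationary probability vector of the stochastic matrix T = T_{L,A}. -/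
open MeasureTheory Filter Topology
open scoped ENNReal

namespace AutoMarkov

variable {X : Type*} {S : Type*}

theorem stmt9 [Fintype X] [Fintype S] [DecidableEq S]
    (l : X → ℝ≥0∞) (hl1 : ∑ x : X, l x = 1)
    (πf : S → X → S)
    (L : X → X → ℝ≥0∞) (hLl : ∀ x y : X, L x y = l y)
    (k : S → ℝ≥0∞) (hk1 : ∑ s : S, k s = 1)
    (hkstat : ∀ s₁ : S, ∑ s₀ : S, k s₀ * Kmat πf l s₀ s₁ = k s₁) :
    (∑ p : S × X, k p.1 * l p.2 = 1) ∧
    ∀ q : S × X, ∑ p : S × X, (k p.1 * l p.2) * Tmat πf L p q = k q.1 * l q.2 := by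
  constructor
  · rw [Fintype.sum_prod_type, ← Finset.sum_mul_sum, hk1, hl1, one_mul]
  · intro q
    have key : ∀ p : S × X, (k p.1 * l p.2) * Tmat πf L p q
        = (k p.1 * if πf p.1 p.2 = q.1 then l p.2 else 0) * l q.2 := by
      intro p
      simp only [Tmat, hLl]
      split <;> ring
    simp only [key]
    rw [← Finset.sum_mul, Fintype.sum_prod_type]
    have : ∀ s : S, ∑ x : X, k s * (if πf s x = q.1 then l x else 0)
        = k s * Kmat πf l s q.1 := by
      intro s
      rw [Kmat, Finset.mul_sum]
    simp only [mul_ite, mul_zero] at this ⊢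
    rw [Finset.sum_congr rfl fun s _ => this s, hkstat q.1]

end AutoMarkov
end

section
/- Let A = (X, S, π, λ) be a reversible Mealy automaton, L a stochastic matrix on X with stationary probability vector l. Then the constant vector k = (1/|S|, …, 1/|S|) is a stationary probability vector of K = K_{l,A}, and k ⊗ l (with coordinates (k⊗l)_{(s,x)} = l_x/|S|) is a stationary probability vector of T = T_{L,A}. -/
open MeasureTheory Filter Topology
open scoped ENNReal

namespace AutoMarkov

variable {X : Type*} {S : Type*}

theorem stmt11 [Fintype X] [Fintype S] [DecidableEq S] [Nonempty S]
    (πf : S → X → S) (lam : S → X → X) (hrev : Reversible πf)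
    (L : X → X → ℝ≥0∞) (l : X → ℝ≥0∞)
    (hL : ∀ x, ∑ y : X, L x y = 1) (hl1 : ∑ x : X, l x = 1)
    (hstat : ∀ y, ∑ x : X, l x * L x y = l y) :
    (∑ s : S, (Fintype.card S : ℝ≥0∞)⁻¹ = 1) ∧
    (∀ s₁ : S, ∑ s₀ : S, (Fintype.card S : ℝ≥0∞)⁻¹ * Kmat πf l s₀ s₁ =
      (Fintype.card S : ℝ≥0∞)⁻¹) ∧
    (∑ p : S × X, (Fintype.card S : ℝ≥0∞)⁻¹ * l p.2 = 1) ∧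
    (∀ q : S × X, ∑ p : S × X, ((Fintype.card S : ℝ≥0∞)⁻¹ * l p.2) * Tmat πf L p q =
      (Fintype.card S : ℝ≥0∞)⁻¹ * l q.2) := by
  have hcard : (Fintype.card S : ℝ≥0∞) ≠ 0 := by
    exact_mod_cast Fintype.card_ne_zero
  have hcardtop : (Fintype.card S : ℝ≥0∞) ≠ ⊤ := ENNReal.natCast_ne_top _
  have hsum1 : (∑ _s : S, (Fintype.card S : ℝ≥0∞)⁻¹) = 1 := by
    rw [Finset.sum_const, Finset.card_univ, nsmul_eq_mul,
      ENNReal.mul_inv_cancel hcard hcardtop]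
  have key : ∀ (s₁ : S) (x : X) (a : ℝ≥0∞),
      (∑ s₀ : S, if πf s₀ x = s₁ then a else 0) = a := by
    intro s₁ x a
    obtain ⟨s₀, h1, h2⟩ := hrev s₁ x
    rw [Finset.sum_eq_single s₀]
    · simp [h1]
    · intro b _ hb
      rw [if_neg]
      exact fun h => hb (h2 b h)
    · simp
  refine ⟨hsum1, ?_, ?_, ?_⟩
  · intro s₁
    simp only [Kmat]
    rw [← Finset.mul_sum, Finset.sum_comm]
    simp only [key]
    rw [hl1, mul_one]
  · rw [Fintype.sum_prod_type]
    simp only [← Finset.mul_sum, hl1, mul_one]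
    exact hsum1
  · rintro ⟨s₁, x₁⟩
    rw [Fintype.sum_prod_type, Finset.sum_comm]
    simp only [Tmat, mul_ite, mul_zero, key]
    simp only [mul_assoc, ← Finset.mul_sum, hstat]

end AutoMarkov
end
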